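/- arXiv:1805.08370 — 5 statements merged into one kernel-verified Lean document; each statement's English description precedes it below -/
import Mathlib

section
/- Let f : ℝ^d → ℝ be differentiable with L-Lipschitz gradient. Suppose ‖∇f(x)‖ ≥ ε for a point x, let y = x − (1/L)∇f(x), and let u be any point with ‖u − y‖ ≤ ε/(8L). Then f(u) ≤ f(x). -/
open intervalIntegral

lemma descent_lemma {F : Type*} [NormedAddCommGroup F] [InnerProductSpace ℝ F] [CompleteSpace F]
    (f : F → ℝ) (L : ℝ) (hL : 0 < L) (hf : Differentiable ℝ f)
    (hLip : ∀ a b, ‖gradient f a - gradient f b‖ ≤ L * ‖a - b‖)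
    (x u : F) :
    f u ≤ f x + inner ℝ (gradient f x) (u - x) + L / 2 * ‖u - x‖ ^ 2 := by
  set v := u - x with hv
  have hgradcont : Continuous (gradient f) := by
    apply (LipschitzWith.of_dist_le_mul (K := L.toNNReal) ?_).continuous
    intro a b
    simpa [dist_eq_norm, Real.coe_toNNReal _ hL.le] using hLip a b
  have hline : ∀ t : ℝ, HasDerivAt (fun t : ℝ => x + t • v) v t := by
    intro t
    simpa using ((hasDerivAt_id t).smul_const v).const_add x
  have hφ : ∀ t : ℝ, HasDerivAt (fun t : ℝ => f (x + t • v))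
      (inner ℝ (gradient f (x + t • v)) v : ℝ) t := by
    intro t
    have h1 := ((hf (x + t • v)).hasGradientAt).hasFDerivAt
    have := h1.comp_hasDerivAt t (hline t)
    exact this
  have hcont : Continuous fun t : ℝ => (inner ℝ (gradient f (x + t • v)) v : ℝ) := by
    exact (hgradcont.comp (by continuity)).inner continuous_const
  have hint : ∫ t in (0:ℝ)..1, (inner ℝ (gradient f (x + t • v)) v : ℝ)
      = f u - f x := by
    have := intervalIntegral.integral_eq_sub_of_hasDerivAt (f := fun t : ℝ => f (x + t • v))
      (f' := fun t : ℝ => (inner ℝ (gradient f (x + t • v)) v : ℝ))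
      (a := 0) (b := 1) (fun t _ => hφ t) (hcont.intervalIntegrable 0 1)
    simpa [hv] using this
  have hbound : ∫ t in (0:ℝ)..1, (inner ℝ (gradient f (x + t • v)) v : ℝ)
      ≤ ∫ t in (0:ℝ)..1, ((inner ℝ (gradient f x) v : ℝ) + L * t * ‖v‖ ^ 2) := by
    apply intervalIntegral.integral_mono_on (by norm_num)
      (hcont.intervalIntegrable 0 1)
      ((by continuity : Continuous fun t : ℝ => (inner ℝ (gradient f x) v : ℝ) + L * t * ‖v‖^2).intervalIntegrable 0 1)
    intro t ht
    rcases ht with ⟨ht0, _⟩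
    have key : (inner ℝ (gradient f (x + t • v)) v : ℝ) - inner ℝ (gradient f x) v
        ≤ L * t * ‖v‖ ^ 2 := by
      have h1 : (inner ℝ (gradient f (x + t • v)) v : ℝ) - inner ℝ (gradient f x) v
          = inner ℝ (gradient f (x + t • v) - gradient f x) v := by
        rw [inner_sub_left]
      rw [h1]
      calc (inner ℝ (gradient f (x + t • v) - gradient f x) v : ℝ)
          ≤ ‖gradient f (x + t • v) - gradient f x‖ * ‖v‖ :=
            real_inner_le_norm _ _
        _ ≤ (L * ‖(x + t • v) - x‖) * ‖v‖ := by
            apply mul_le_mul_of_nonneg_right (hLip _ _) (norm_nonneg _)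
        _ = L * t * ‖v‖ ^ 2 := by
            rw [show (x + t • v) - x = t • v by abel, norm_smul]
            simp [abs_of_nonneg ht0]
            ring
    linarith
  have hcalc : ∫ t in (0:ℝ)..1, ((inner ℝ (gradient f x) v : ℝ) + L * t * ‖v‖ ^ 2)
      = (inner ℝ (gradient f x) v : ℝ) + L / 2 * ‖v‖ ^ 2 := by
    rw [intervalIntegral.integral_add (intervalIntegrable_const)
      ((by fun_prop : Continuous fun t : ℝ => L * t * ‖v‖ ^ 2).intervalIntegrable 0 1)]
    have h2 : ∫ t in (0:ℝ)..1, L * t * ‖v‖ ^ 2 = L / 2 * ‖v‖ ^ 2 := by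
      have h3 : (fun t : ℝ => L * t * ‖v‖ ^ 2) = fun t : ℝ => (L * ‖v‖ ^ 2) * t := by
        funext t; ring
      rw [h3, intervalIntegral.integral_const_mul, integral_id]
      ring
    rw [h2]
    simp
  linarith [hint ▸ (hcalc ▸ hbound)]

/-- A gradient step followed by a small perturbation does not increase the function value,
provided the gradient is large. -/
theorem gradient_step_perturbed_decrease (d : ℕ) (f : EuclideanSpace ℝ (Fin d) → ℝ)
    (L ε : ℝ) (hL : 0 < L) (hε : 0 < ε)
    (hf : Differentiable ℝ f)
    (hLip : ∀ a b, ‖gradient f a - gradient f b‖ ≤ L * ‖a - b‖)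
    (x u : EuclideanSpace ℝ (Fin d))
    (hx : ε ≤ ‖gradient f x‖)
    (hu : ‖u - (x - (1/L) • gradient f x)‖ ≤ ε / (8 * L)) :
    f u ≤ f x := by
  have hd := descent_lemma f L hL hf hLip x u
  set g := gradient f x with hg
  set w := u - (x - (1/L) • g) with hw
  have hvw : u - x = w - (1/L) • g := by rw [hw]; abel
  set G := ‖g‖ with hG
  have hGpos : 0 < G := lt_of_lt_of_le hε hx
  have hinner : (inner ℝ g (u - x) : ℝ) = inner ℝ g w - (1/L) * G ^ 2 := by
    rw [hvw, inner_sub_right, inner_smul_right, real_inner_self_eq_norm_sq]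
  have hiw : (inner ℝ g w : ℝ) ≤ G * ‖w‖ := by
    calc (inner ℝ g w : ℝ) ≤ ‖g‖ * ‖w‖ := real_inner_le_norm _ _
      _ = G * ‖w‖ := rfl
  have hnv : ‖u - x‖ ≤ ‖w‖ + 1/L * G := by
    rw [hvw]
    calc ‖w - (1/L) • g‖ ≤ ‖w‖ + ‖(1/L) • g‖ := norm_sub_le _ _
      _ = ‖w‖ + 1/L * G := by
          rw [norm_smul, Real.norm_eq_abs, abs_of_pos (by positivity : (0:ℝ) < 1/L), hG]
  have hnv2 : ‖u - x‖ ^ 2 ≤ (‖w‖ + 1/L * G) ^ 2 := by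
    have h0 : (0:ℝ) ≤ ‖u - x‖ := norm_nonneg _
    nlinarith [hnv, h0]
  set W := ‖w‖ with hW
  have hWnn : (0:ℝ) ≤ W := norm_nonneg w
  have h8' : 8 * (L * W) ≤ G := by
    have hwb : W ≤ G / (8 * L) := hu.trans (by gcongr)
    rw [le_div_iff₀ (by positivity)] at hwb
    linarith
  have key : G * W - 1/L * G ^ 2 + L/2 * (W + 1/L * G) ^ 2 ≤ 0 := by
    have hexp : L/2 * (W + 1/L * G) ^ 2 = L/2 * W ^ 2 + G * W + G ^ 2 / (2 * L) := by
      field_simp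
      ring
    rw [hexp]
    have hmain : 2 * G * W + L/2 * W ^ 2 ≤ G ^ 2 / (2 * L) := by
      rw [le_div_iff₀ (by positivity)]
      nlinarith [mul_le_mul_of_nonneg_left h8' hGpos.le,
        mul_self_le_mul_self (by positivity : (0:ℝ) ≤ 8 * (L * W)) h8']
    have hhalf : 1/L * G ^ 2 - G ^ 2 / (2 * L) = G ^ 2 / (2 * L) := by
      field_simp
      ring
    linarith
  have hmono : L/2 * ‖u - x‖ ^ 2 ≤ L/2 * (W + 1/L * G) ^ 2 :=
    mul_le_mul_of_nonneg_left hnv2 (by positivity)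
  linarith [hd, hinner, hiw, hmono, key]
end

section
/- Suppose h : [−12, 12] → ℝ is four times continuously differentiable with |h'''(a) − h'''(b)| ≤ |a − b| for all a, b, and there exists γ ∈ [−1, 1] with h''(γ) ≤ −21. Then min{h(12), h(9), h(−9), h(−12)} ≤ h(0) − 536. -/
open Set

private lemma iterWithin_eq {f : ℝ → ℝ} {N : ℕ} (hf : ContDiff ℝ (N:ℕ∞) f) {m : ℕ} (hm : m ≤ N)
    {s : Set ℝ} (hs : UniqueDiffOn ℝ s) {x : ℝ} (hx : x ∈ s) :
    iteratedDerivWithin m f s x = iteratedDeriv m f x := by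
  have H : HasFTaylorSeriesUpTo (N : ℕ∞) f (ftaylorSeries ℝ f) :=
    contDiff_iff_ftaylorSeries.mp hf
  have h2 := (H.hasFTaylorSeriesUpToOn s).eq_iteratedFDerivWithin_of_uniqueDiffOn
    (by exact_mod_cast hm) hs hx
  rw [iteratedDerivWithin_eq_iteratedFDerivWithin, iteratedDeriv_eq_iteratedFDeriv, ← h2]
  rfl

private lemma taylor_bound {f : ℝ → ℝ} {n N : ℕ} (hn : n + 1 ≤ N) (hf : ContDiff ℝ (N:ℕ∞) f)
    {x C : ℝ} (hx : 0 < x) (hB : ∀ y ∈ Ioo (0:ℝ) x, |iteratedDeriv (n+1) f y| ≤ C) :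
    |f x - ∑ k ∈ Finset.range (n+1), ((k.factorial : ℝ)⁻¹ * x ^ k) * iteratedDeriv k f 0|
      ≤ C * x ^ (n+1) / (n+1).factorial := by
  have hud : UniqueDiffOn ℝ (Icc (0:ℝ) x) := uniqueDiffOn_Icc hx
  have hco : ContDiffOn ℝ n f (Icc 0 x) :=
    (hf.of_le (by exact_mod_cast Nat.le_of_succ_le hn)).contDiffOn
  have hdiff : DifferentiableOn ℝ (iteratedDerivWithin n f (Icc 0 x)) (Ioo 0 x) :=
    ((hf.differentiable_iteratedDeriv n (by exact_mod_cast hn)).differentiableOn).congr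
      fun y hy => iterWithin_eq hf (Nat.le_of_succ_le hn) hud (Ioo_subset_Icc_self hy)
  obtain ⟨x', hx', heq⟩ := taylor_mean_remainder_lagrange hx.ne (by rwa [uIcc_of_le hx.le])
    (by rwa [uIcc_of_le hx.le, uIoo_of_le hx.le])
  rw [uIcc_of_le hx.le] at heq
  rw [uIoo_of_le hx.le] at hx'
  have hC0 : 0 ≤ C := le_trans (abs_nonneg _) (hB (x/2) ⟨by positivity, by linarith⟩)
  have hsum : taylorWithinEval f n (Icc 0 x) 0 x
      = ∑ k ∈ Finset.range (n+1), ((k.factorial : ℝ)⁻¹ * x ^ k) * iteratedDeriv k f 0 := by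
    rw [taylor_within_apply]
    refine Finset.sum_congr rfl fun k hk => ?_
    rw [iterWithin_eq hf (by have := Finset.mem_range.mp hk; omega) hud (left_mem_Icc.mpr hx.le)]
    simp [smul_eq_mul]
  rw [← hsum, heq, iterWithin_eq hf hn hud (Ioo_subset_Icc_self hx'), sub_zero,
    abs_div, abs_mul, abs_of_pos (pow_pos hx _), Nat.abs_cast]
  gcongr
  exact hB x' hx'

private lemma taylor3 {f : ℝ → ℝ} (hf : ContDiff ℝ ((4:ℕ):ℕ∞) f)
    {x : ℝ} (hx0 : 0 < x) (hx12 : x ≤ 12)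
    (hB : ∀ y ∈ Ioo (-12:ℝ) 12, |iteratedDeriv 4 f y| ≤ 1) :
    |f x - (f 0 + iteratedDeriv 1 f 0 * x + iteratedDeriv 2 f 0 * x^2/2
      + iteratedDeriv 3 f 0 * x^3/6)| ≤ x^4/24 := by
  have := taylor_bound (n := 3) (N := 4) (by norm_num) hf hx0
    (C := 1) (fun y hy => hB y ⟨by linarith [hy.1], by linarith [hy.2]⟩)
  simp only [Finset.sum_range_succ, Finset.sum_range_zero] at this
  norm_num [Nat.factorial] at this ⊢
  convert this using 2 <;> ring

private lemma taylor1 {f : ℝ → ℝ} (hf : ContDiff ℝ ((2:ℕ):ℕ∞) f)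
    {x : ℝ} (hx0 : 0 < x) (hx1 : x ≤ 12)
    (hB : ∀ y ∈ Ioo (-12:ℝ) 12, |iteratedDeriv 2 f y| ≤ 1) :
    |f x - (f 0 + iteratedDeriv 1 f 0 * x)| ≤ x^2/2 := by
  have := taylor_bound (n := 1) (N := 2) (by norm_num) hf hx0
    (C := 1) (fun y hy => hB y ⟨by linarith [hy.1], by linarith [hy.2]⟩)
  simp only [Finset.sum_range_succ, Finset.sum_range_zero] at this
  norm_num [Nat.factorial] at this ⊢
  convert this using 2 <;> ring

/-- Dimension-free negative curvature exploitation: if `h` has `1`-Lipschitz third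
derivative on `[-12,12]` and `h''(γ) ≤ -21` for some `γ ∈ [-1,1]`, then one of the four
query points decreases the value by at least `536`. -/
theorem exploit_nc_normalized (h : ℝ → ℝ) (hh : ContDiff ℝ 4 h)
    (hLip : ∀ a ∈ Set.Icc (-12:ℝ) 12, ∀ b ∈ Set.Icc (-12:ℝ) 12,
      |iteratedDeriv 3 h a - iteratedDeriv 3 h b| ≤ |a - b|)
    (hγ : ∃ γ ∈ Set.Icc (-1:ℝ) 1, iteratedDeriv 2 h γ ≤ -21) :
    min (min (h 12) (h 9)) (min (h (-9)) (h (-12))) ≤ h 0 - 536 := by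
  obtain ⟨γ, ⟨hγl, hγr⟩, hγ21⟩ := hγ
  have hh4 : ContDiff ℝ ((4:ℕ):ℕ∞) h := by exact_mod_cast hh
  have hd3 : Differentiable ℝ (iteratedDeriv 3 h) :=
    hh4.differentiable_iteratedDeriv 3 (by norm_num)
  have h43 : iteratedDeriv 4 h = deriv (iteratedDeriv 3 h) := by
    rw [show (4:ℕ) = 3+1 from rfl, iteratedDeriv_succ]
  -- bound on the fourth derivative
  have hB : ∀ y ∈ Ioo (-12:ℝ) 12, |iteratedDeriv 4 h y| ≤ 1 := by
    intro y hy
    have hda : HasDerivAt (iteratedDeriv 3 h) (iteratedDeriv 4 h y) y := by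
      rw [h43]; exact (hd3 y).hasDerivAt
    have := hda.le_of_lip' zero_le_one ?_
    · simpa using this
    · filter_upwards [isOpen_Ioo.mem_nhds hy] with a ha
      have := hLip a (Ioo_subset_Icc_self ha) y (Ioo_subset_Icc_self hy)
      simpa using this
  -- Taylor expansions at 9 and 12
  have T9 := taylor3 hh4 (show (0:ℝ) < 9 by norm_num) (by norm_num) hB
  have T12 := taylor3 hh4 (show (0:ℝ) < 12 by norm_num) (by norm_num) hB
  -- reflected function
  have hgc : ContDiff ℝ ((4:ℕ):ℕ∞) (fun t => h (-t)) := hh4.comp contDiff_neg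
  have hBg : ∀ y ∈ Ioo (-12:ℝ) 12, |iteratedDeriv 4 (fun t => h (-t)) y| ≤ 1 := by
    intro y hy
    have := hB (-y) ⟨by linarith [hy.2], by linarith [hy.1]⟩
    rw [iteratedDeriv_comp_neg, smul_eq_mul]
    norm_num
    exact this
  have Tm9 := taylor3 hgc (show (0:ℝ) < 9 by norm_num) (by norm_num) hBg
  have Tm12 := taylor3 hgc (show (0:ℝ) < 12 by norm_num) (by norm_num) hBg
  simp only [iteratedDeriv_comp_neg, neg_zero, smul_eq_mul] at Tm9 Tm12
  norm_num at Tm9 Tm12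
  -- second derivative as a C^2 function
  have hf2 : ContDiff ℝ ((2:ℕ):ℕ∞) (iteratedDeriv 2 h) := by
    rw [iteratedDeriv_eq_iterate]
    exact_mod_cast ContDiff.iterate_deriv' 2 2 (by exact_mod_cast hh)
  have hB2 : ∀ y ∈ Ioo (-12:ℝ) 12, |iteratedDeriv 2 (iteratedDeriv 2 h) y| ≤ 1 := by
    intro y hy
    have e : iteratedDeriv 2 (iteratedDeriv 2 h) y = iteratedDeriv 4 h y := by
      simp only [iteratedDeriv_eq_iterate, ← Function.iterate_add_apply]
    rw [e]; exact hB y hy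
  have h31 : iteratedDeriv 1 (iteratedDeriv 2 h) = iteratedDeriv 3 h := by
    rw [iteratedDeriv_eq_iterate, iteratedDeriv_eq_iterate, ← Function.iterate_add_apply,
      show (1+2) = 3 from rfl, ← iteratedDeriv_eq_iterate]
  have hd1 : iteratedDeriv 1 h = deriv h := iteratedDeriv_one
  rw [hd1] at T9 T12
  have hγsq : γ^2 ≤ 1 := by nlinarith
  -- key curvature bound
  have hkey : iteratedDeriv 2 h 0 + iteratedDeriv 3 h 0 * γ ≤ -20.5 := by
    rcases lt_trichotomy γ 0 with hγ0 | rfl | hγ0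
    · have hgc2 : ContDiff ℝ ((2:ℕ):ℕ∞) (fun t => iteratedDeriv 2 h (-t)) :=
        hf2.comp contDiff_neg
      have hB2g : ∀ y ∈ Ioo (-12:ℝ) 12,
          |iteratedDeriv 2 (fun t => iteratedDeriv 2 h (-t)) y| ≤ 1 := by
        intro y hy
        rw [iteratedDeriv_comp_neg]
        simpa using hB2 (-y) ⟨by linarith [hy.2], by linarith [hy.1]⟩
      have G := taylor1 hgc2 (show (0:ℝ) < -γ by linarith) (by linarith) hB2g
      simp only [iteratedDeriv_comp_neg, neg_zero, smul_eq_mul] at G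
      norm_num [h31] at G
      rw [abs_le] at G
      nlinarith [G.1]
    · simpa using hγ21.trans (by norm_num)
    · have G := taylor1 hf2 hγ0 (by linarith) hB2
      rw [h31, abs_le] at G
      nlinarith [G.1]
  -- put everything together
  rw [abs_le] at T9 T12 Tm9 Tm12
  have m1 : min (min (h 12) (h 9)) (min (h (-9)) (h (-12))) ≤ h 12 :=
    le_trans (min_le_left _ _) (min_le_left _ _)
  have m2 : min (min (h 12) (h 9)) (min (h (-9)) (h (-12))) ≤ h 9 :=
    le_trans (min_le_left _ _) (min_le_right _ _)
  have m3 : min (min (h 12) (h 9)) (min (h (-9)) (h (-12))) ≤ h (-9) :=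
    le_trans (min_le_right _ _) (min_le_left _ _)
  have m4 : min (min (h 12) (h 9)) (min (h (-9)) (h (-12))) ≤ h (-12) :=
    le_trans (min_le_right _ _) (min_le_right _ _)
  rcases le_total (iteratedDeriv 3 h 0) 0 with hc3 | hc3
  · have hc : iteratedDeriv 3 h 0 * (1 - γ) ≤ 0 :=
      mul_nonpos_of_nonpos_of_nonneg hc3 (by linarith)
    linarith [T12.2, Tm9.2, m1, m3]
  · have hc : iteratedDeriv 3 h 0 * (1 + γ) ≥ 0 :=
      mul_nonneg hc3 (by linarith)
    linarith [T9.2, Tm12.2, m2, m4]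
end

section
/- Suppose q : [−12R, 12R] → ℝ has L₃-Lipschitz third derivative, and there exists γ ∈ [−1, 1] with q''(Rγ) ≤ −21 L₃ R². Then min{q(12R), q(9R), q(−9R), q(−12R)} ≤ q(0) − 536 L₃ R⁴. -/
open Set

lemma iterDW_eq (f : ℝ → ℝ) (hf : ContDiff ℝ 4 f) {s : Set ℝ} (hs : UniqueDiffOn ℝ s)
    {n : ℕ} (hn : n ≤ 4) : ∀ x ∈ s, iteratedDerivWithin n f s x = iteratedDeriv n f x := by
  induction n with
  | zero => intro x hx; simp
  | succ n ih =>
    intro x hx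
    have hdiff : Differentiable ℝ (iteratedDeriv n f) :=
      hf.differentiable_iteratedDeriv n (by exact_mod_cast Nat.lt_of_succ_le hn)
    rw [iteratedDerivWithin_succ,
      derivWithin_congr (fun y hy => ih (Nat.le_of_succ_le hn) y hy)
        (ih (Nat.le_of_succ_le hn) x hx),
      (hdiff x).derivWithin (hs x hx), ← iteratedDeriv_succ]

lemma taylor_right (f : ℝ → ℝ) (L b : ℝ) (hb : 0 < b) (hf : ContDiff ℝ 4 f)
    (hC : ∀ y ∈ Ioo 0 b, |iteratedDeriv 4 f y| ≤ L) :
    f b ≤ f 0 + deriv f 0 * b + iteratedDeriv 2 f 0 * b^2/2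
      + iteratedDeriv 3 f 0 * b^3/6 + L * b^4/24 := by
  have hu : UniqueDiffOn ℝ (Icc (0:ℝ) b) := uniqueDiffOn_Icc hb
  have h3 : ContDiffOn ℝ 3 f (Icc 0 b) := (hf.of_le (by norm_num)).contDiffOn
  have hdiff : Differentiable ℝ (iteratedDeriv 3 f) :=
    hf.differentiable_iteratedDeriv 3 (by norm_num)
  have hf' : DifferentiableOn ℝ (iteratedDerivWithin 3 f (Icc 0 b)) (Ioo 0 b) := by
    apply DifferentiableOn.congr (hdiff.differentiableOn)
    intro y hy
    exact iterDW_eq f hf hu (by norm_num) y (Ioo_subset_Icc_self hy)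
  obtain ⟨c, hc, hEq⟩ := taylor_mean_remainder_lagrange (n := 3) (x₀ := 0) (x := b) hb.ne'.symm
    (by rw [uIcc_of_le hb.le]; exact h3) (by rw [uIcc_of_le hb.le, uIoo_of_le hb.le]; exact hf')
  rw [uIcc_of_le hb.le] at hEq; rw [uIoo_of_le hb.le] at hc
  have h0m : (0:ℝ) ∈ Icc (0:ℝ) b := left_mem_Icc.mpr hb.le
  have e : ∀ k, k ≤ 4 → iteratedDerivWithin k f (Icc 0 b) 0 = iteratedDeriv k f 0 :=
    fun k hk => iterDW_eq f hf hu hk 0 h0m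
  have hT : taylorWithinEval f 3 (Icc 0 b) 0 b
      = f 0 + deriv f 0 * b + iteratedDeriv 2 f 0 * b^2/2 + iteratedDeriv 3 f 0 * b^3/6 := by
    rw [taylor_within_apply]
    simp [Finset.sum_range_succ, e 0 (by norm_num), e 1 (by norm_num), e 2 (by norm_num),
      e 3 (by norm_num), Nat.factorial, iteratedDeriv_one]
    ring
  have h4 : iteratedDerivWithin 4 f (Icc 0 b) c = iteratedDeriv 4 f c :=
    iterDW_eq f hf hu le_rfl c (Ioo_subset_Icc_self hc)
  rw [h4] at hEq
  have hcb := abs_le.mp (hC c hc)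
  have hb4 : (0:ℝ) < b^4 := by positivity
  have hrem : iteratedDeriv 4 f c * (b - 0)^(3+1) / ((3+1).factorial : ℝ) ≤ L * b^4 / 24 := by
    have h24 : (((3+1).factorial : ℕ) : ℝ) = 24 := by norm_num [Nat.factorial]
    rw [h24, sub_zero]
    nlinarith [hcb.1, hcb.2, hb4]
  rw [hT] at hEq
  linarith [hEq ▸ hrem]

lemma taylor_pt (f : ℝ → ℝ) (L M x : ℝ) (hf : ContDiff ℝ 4 f) (hx : x ∈ Icc (-M) M)
    (hx0 : x ≠ 0)
    (hC : ∀ y ∈ Ioo (-M) M, |iteratedDeriv 4 f y| ≤ L) :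
    f x ≤ f 0 + deriv f 0 * x + iteratedDeriv 2 f 0 * x^2/2
      + iteratedDeriv 3 f 0 * x^3/6 + L * x^4/24 := by
  obtain ⟨hx1, hx2⟩ := hx
  rcases lt_or_gt_of_ne hx0 with hneg | hpos
  · -- x < 0 : apply taylor_right to f ∘ neg at b = -x
    set g : ℝ → ℝ := fun y => f (-y) with hg
    have hgc : ContDiff ℝ 4 g := hf.comp (contDiff_id.neg)
    have hb : 0 < -x := by linarith
    have hCg : ∀ y ∈ Ioo 0 (-x), |iteratedDeriv 4 g y| ≤ L := by
      intro y hy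
      rw [iteratedDeriv_comp_neg]
      have : (-1 : ℝ)^4 • iteratedDeriv 4 f (-y) = iteratedDeriv 4 f (-y) := by
        norm_num
      rw [this]
      refine hC (-y) ⟨by linarith [hy.2], by linarith [hy.1, hb]⟩
    have key := taylor_right g L (-x) hb hgc hCg
    have e1 : deriv g 0 = -deriv f 0 := by
      have := iteratedDeriv_comp_neg 1 f 0
      simpa [iteratedDeriv_one, g] using this
    have e2 : iteratedDeriv 2 g 0 = iteratedDeriv 2 f 0 := by
      have := iteratedDeriv_comp_neg 2 f 0
      simpa [g] using this
    have e3 : iteratedDeriv 3 g 0 = -iteratedDeriv 3 f 0 := by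
      have := iteratedDeriv_comp_neg 3 f 0
      simp only [g, this, neg_zero, smul_eq_mul]
      ring
    have egb : g (-x) = f x := by simp [g]
    have eg0 : g 0 = f 0 := by simp [g]
    rw [egb, eg0, e1, e2, e3] at key
    calc f x ≤ f 0 + -deriv f 0 * -x + iteratedDeriv 2 f 0 * (-x)^2/2
        + -iteratedDeriv 3 f 0 * (-x)^3/6 + L * (-x)^4/24 := key
      _ = f 0 + deriv f 0 * x + iteratedDeriv 2 f 0 * x^2/2
        + iteratedDeriv 3 f 0 * x^3/6 + L * x^4/24 := by ring
  · exact taylor_right f L x hpos hf fun y hy =>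
      hC y ⟨by linarith [hy.1, hy.2], by linarith [hy.2]⟩

/-- Negative curvature exploitation: if `q` has `L₃`-Lipschitz third derivative on
`[-12R, 12R]` and `q''(Rγ) ≤ -21 L₃ R²` for some `γ ∈ [-1,1]`, then one of the four
query points decreases the value by at least `536 L₃ R⁴`. -/
theorem exploit_nc (q : ℝ → ℝ) (R L₃ : ℝ) (hR : 0 < R) (hL : 0 < L₃)
    (hq : ContDiff ℝ 4 q)
    (hLip : ∀ a ∈ Set.Icc (-(12*R)) (12*R), ∀ b ∈ Set.Icc (-(12*R)) (12*R),
      |iteratedDeriv 3 q a - iteratedDeriv 3 q b| ≤ L₃ * |a - b|)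
    (hγ : ∃ γ ∈ Set.Icc (-1:ℝ) 1, iteratedDeriv 2 q (R * γ) ≤ -21 * L₃ * R ^ 2) :
    min (min (q (12*R)) (q (9*R))) (min (q (-(9*R))) (q (-(12*R)))) ≤ q 0 - 536 * L₃ * R ^ 4 := by
  obtain ⟨γ, hγm, hγ2⟩ := hγ
  obtain ⟨hγ1, hγu⟩ := hγm
  -- bound on the fourth derivative in the interior
  have hdiff3 : Differentiable ℝ (iteratedDeriv 3 q) :=
    hq.differentiable_iteratedDeriv 3 (by norm_num)
  have L4 : ∀ y ∈ Ioo (-(12*R)) (12*R), |iteratedDeriv 4 q y| ≤ L₃ := by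
    intro y hy
    have hd : HasDerivAt (iteratedDeriv 3 q) (iteratedDeriv 4 q y) y := by
      rw [iteratedDeriv_succ (n := 3)]
      exact (hdiff3 y).hasDerivAt
    have lip : LipschitzOnWith (Real.toNNReal L₃) (iteratedDeriv 3 q)
        (Icc (-(12*R)) (12*R)) := by
      apply LipschitzOnWith.of_dist_le_mul
      intro a ha b hb
      rw [Real.dist_eq, Real.dist_eq, Real.coe_toNNReal _ hL.le]
      exact hLip a ha b hb
    have hnh : Icc (-(12*R)) (12*R) ∈ nhds y := Icc_mem_nhds hy.1 hy.2
    have := hd.le_of_lipschitzOn hnh lip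
    rwa [Real.norm_eq_abs, Real.coe_toNNReal _ hL.le] at this
  -- second-derivative Taylor estimate at R*γ
  have hsabs : -R ≤ R * γ ∧ R * γ ≤ R := by
    constructor <;> nlinarith
  have hD2 : ∀ x : ℝ, HasDerivAt (fun z => iteratedDeriv 2 q z - iteratedDeriv 3 q 0 * z)
      (iteratedDeriv 3 q x - iteratedDeriv 3 q 0) x := by
    intro x
    have h1 : HasDerivAt (iteratedDeriv 2 q) (iteratedDeriv 3 q x) x := by
      rw [iteratedDeriv_succ (n := 2)]
      exact ((hq.differentiable_iteratedDeriv 2 (by norm_num)) x).hasDerivAt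
    have h2 : HasDerivAt (fun z : ℝ => iteratedDeriv 3 q 0 * z) (iteratedDeriv 3 q 0) x := by
      simpa using (hasDerivAt_id x).const_mul (iteratedDeriv 3 q 0)
    exact h1.sub h2
  have hmem12 : ∀ x : ℝ, x ∈ Icc (-R) R → x ∈ Icc (-(12*R)) (12*R) := by
    intro x hx
    exact ⟨by linarith [hx.1], by linarith [hx.2]⟩
  have hB : iteratedDeriv 2 q 0 + iteratedDeriv 3 q 0 * (R * γ) ≤ -20 * L₃ * R ^ 2 := by
    have key := Convex.norm_image_sub_le_of_norm_hasDerivWithin_le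
      (f := fun z => iteratedDeriv 2 q z - iteratedDeriv 3 q 0 * z)
      (f' := fun x => iteratedDeriv 3 q x - iteratedDeriv 3 q 0)
      (s := Icc (-R) R) (C := L₃ * R) (x := 0) (y := R * γ)
      (fun x hx => (hD2 x).hasDerivWithinAt)
      (fun x hx => by
        rw [Real.norm_eq_abs]
        have h0 : (0:ℝ) ∈ Icc (-(12*R)) (12*R) := ⟨by linarith, by linarith⟩
        have := hLip x (hmem12 x hx) 0 h0
        have habs : |x - 0| ≤ R := by
          rw [sub_zero, abs_le]; exact ⟨hx.1, hx.2⟩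
        nlinarith [abs_nonneg (x - 0)])
      (convex_Icc _ _) ⟨by linarith, by linarith⟩ ⟨hsabs.1, hsabs.2⟩
    rw [Real.norm_eq_abs, Real.norm_eq_abs] at key
    have hs0 : |R * γ - 0| ≤ R := by rw [sub_zero, abs_le]; exact hsabs
    have h1 : |(iteratedDeriv 2 q (R*γ) - iteratedDeriv 3 q 0 * (R*γ))
        - (iteratedDeriv 2 q 0 - iteratedDeriv 3 q 0 * 0)| ≤ L₃ * R * R := by
      calc _ ≤ L₃ * R * |R * γ - 0| := key
        _ ≤ L₃ * R * R := mul_le_mul_of_nonneg_left hs0 (by positivity)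
    have h2 := (abs_le.mp h1).1
    nlinarith [hγ2]
  -- Taylor upper bounds at the four query points
  have hne : (9:ℝ) * R ≠ 0 := by positivity
  have T1 := taylor_pt q L₃ (12*R) (12*R) hq ⟨by linarith, le_rfl⟩ (by positivity) L4
  have T2 := taylor_pt q L₃ (12*R) (9*R) hq ⟨by linarith, by linarith⟩ (by positivity) L4
  have T3 := taylor_pt q L₃ (12*R) (-(9*R)) hq ⟨by linarith, by linarith⟩
    (neg_ne_zero.mpr (by positivity)) L4
  have T4 := taylor_pt q L₃ (12*R) (-(12*R)) hq ⟨le_rfl, by linarith⟩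
    (neg_ne_zero.mpr (by positivity)) L4
  -- convex combination
  set μ₁ : ℝ := 3*(1+γ)/14 with hμ₁
  set μ₂ : ℝ := 2*(1-γ)/7 with hμ₂
  set μ₃ : ℝ := 2*(1+γ)/7 with hμ₃
  set μ₄ : ℝ := 3*(1-γ)/14 with hμ₄
  have hμ1 : 0 ≤ μ₁ := by rw [hμ₁]; linarith
  have hμ2 : 0 ≤ μ₂ := by rw [hμ₂]; linarith
  have hμ3 : 0 ≤ μ₃ := by rw [hμ₃]; linarith
  have hμ4 : 0 ≤ μ₄ := by rw [hμ₄]; linarith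
  set M := min (min (q (12*R)) (q (9*R))) (min (q (-(9*R))) (q (-(12*R)))) with hM
  have m1 : M ≤ q (12*R) := le_trans (min_le_left _ _) (min_le_left _ _)
  have m2 : M ≤ q (9*R) := le_trans (min_le_left _ _) (min_le_right _ _)
  have m3 : M ≤ q (-(9*R)) := le_trans (min_le_right _ _) (min_le_left _ _)
  have m4 : M ≤ q (-(12*R)) := le_trans (min_le_right _ _) (min_le_right _ _)
  have hconv : M ≤ μ₁ * q (12*R) + μ₂ * q (9*R) + μ₃ * q (-(9*R)) + μ₄ * q (-(12*R)) := by
    have e1 := mul_nonneg hμ1 (sub_nonneg.mpr m1)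
    have e2 := mul_nonneg hμ2 (sub_nonneg.mpr m2)
    have e3 := mul_nonneg hμ3 (sub_nonneg.mpr m3)
    have e4 := mul_nonneg hμ4 (sub_nonneg.mpr m4)
    have hsum : μ₁ * q (12*R) + μ₂ * q (9*R) + μ₃ * q (-(9*R)) + μ₄ * q (-(12*R)) - M
        = μ₁ * (q (12*R) - M) + μ₂ * (q (9*R) - M) + μ₃ * (q (-(9*R)) - M)
          + μ₄ * (q (-(12*R)) - M) := by
      rw [hμ₁, hμ₂, hμ₃, hμ₄]; ring
    linarith
  have u1 := mul_le_mul_of_nonneg_left T1 hμ1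
  have u2 := mul_le_mul_of_nonneg_left T2 hμ2
  have u3 := mul_le_mul_of_nonneg_left T3 hμ3
  have u4 := mul_le_mul_of_nonneg_left T4 hμ4
  have hS : μ₁ * (q 0 + deriv q 0 * (12*R) + iteratedDeriv 2 q 0 * (12*R)^2/2
        + iteratedDeriv 3 q 0 * (12*R)^3/6 + L₃ * (12*R)^4/24)
      + μ₂ * (q 0 + deriv q 0 * (9*R) + iteratedDeriv 2 q 0 * (9*R)^2/2
        + iteratedDeriv 3 q 0 * (9*R)^3/6 + L₃ * (9*R)^4/24)
      + μ₃ * (q 0 + deriv q 0 * (-(9*R)) + iteratedDeriv 2 q 0 * (-(9*R))^2/2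
        + iteratedDeriv 3 q 0 * (-(9*R))^3/6 + L₃ * (-(9*R))^4/24)
      + μ₄ * (q 0 + deriv q 0 * (-(12*R)) + iteratedDeriv 2 q 0 * (-(12*R))^2/2
        + iteratedDeriv 3 q 0 * (-(12*R))^3/6 + L₃ * (-(12*R))^4/24)
      = q 0 + 54 * R^2 * (iteratedDeriv 2 q 0 + iteratedDeriv 3 q 0 * (R * γ))
        + (1053/2) * L₃ * R^4 := by
    rw [hμ₁, hμ₂, hμ₃, hμ₄]; ring
  have hquad : 54 * R^2 * (iteratedDeriv 2 q 0 + iteratedDeriv 3 q 0 * (R * γ))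
      ≤ 54 * R^2 * (-20 * L₃ * R^2) := by
    have : (0:ℝ) ≤ 54 * R^2 := by positivity
    exact mul_le_mul_of_nonneg_left hB this
  have hLR4 : (0:ℝ) < L₃ * R^4 := by positivity
  linarith [hconv, u1, u2, u3, u4, hS, hquad, hLR4]
end

section
/- Let h : [−12,12] → ℝ have 1-Lipschitz third derivative, and suppose −h'''(0) + h''(0) ≤ −20. Then min{h(−12), h(9)} ≤ h(0) − 536. -/
open Set

lemma taylor_key (f : ℝ → ℝ) (hf : ContDiff ℝ 4 f)
    (hLip : ∀ x ∈ Set.Icc (0:ℝ) 12, iteratedDeriv 3 f x - iteratedDeriv 3 f 0 ≤ x)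
    {x : ℝ} (hx : x ∈ Set.Icc (0:ℝ) 12) :
    f x ≤ f 0 + deriv f 0 * x + iteratedDeriv 2 f 0 * x^2/2
        + iteratedDeriv 3 f 0 * x^3/6 + x^4/24 := by
  set f1 := deriv f with hf1'
  set f2 := deriv f1 with hf2'
  set f3 := deriv f2 with hf3'
  have h1 : iteratedDeriv 1 f = f1 := by simp [iteratedDeriv_one, hf1']
  have h2 : iteratedDeriv 2 f = f2 := by
    rw [show (2:ℕ) = 1+1 from rfl, iteratedDeriv_succ, h1, hf2']
  have h3 : iteratedDeriv 3 f = f3 := by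
    rw [show (3:ℕ) = 2+1 from rfl, iteratedDeriv_succ, h2, hf3']
  have dfd : Differentiable ℝ f := hf.differentiable (by norm_num)
  have df1 : Differentiable ℝ f1 := by
    have := hf.differentiable_iteratedDeriv 1 (by norm_num)
    rwa [h1] at this
  have df2 : Differentiable ℝ f2 := by
    have := hf.differentiable_iteratedDeriv 2 (by norm_num)
    rwa [h2] at this
  have step : ∀ (g G : ℝ → ℝ), (∀ y, HasDerivAt G (g y) y) →
      (∀ y ∈ Icc (0:ℝ) 12, g y ≤ 0) → ∀ y ∈ Icc (0:ℝ) 12, G y ≤ G 0 := by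
    intro g G hG hg y hy
    have hGd : Differentiable ℝ G := fun z => (hG z).differentiableAt
    have := antitoneOn_of_deriv_nonpos (convex_Icc (0:ℝ) 12) hGd.continuous.continuousOn
      (hGd.differentiableOn.mono interior_subset)
      (fun z hz => by rw [(hG z).deriv]; exact hg z (interior_subset hz))
    exact this (left_mem_Icc.mpr (by norm_num)) hy hy.1
  have hg2 : ∀ y ∈ Icc (0:ℝ) 12, f2 y - f2 0 - f3 0 * y - y^2/2 ≤ 0 := by
    have st := step (fun y => f3 y - f3 0 - y)
      (fun y => f2 y - f2 0 - f3 0 * y - y^2/2)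
      (fun y => by
        have hA : HasDerivAt (fun y:ℝ => f3 0 * y) (f3 0) y := by
          simpa using (hasDerivAt_id y).const_mul (f3 0)
        have hB : HasDerivAt (fun y:ℝ => y^2/2) y y := by
          have := (hasDerivAt_pow 2 y).div_const 2
          refine this.congr_deriv ?_; push_cast; ring
        have hS := (((df2 y).hasDerivAt.sub_const (f2 0)).sub hA).sub hB
        simp only [Pi.sub_def] at hS; exact hS)
      (fun y hy => by have := hLip y hy; rw [h3] at this; show f3 y - f3 0 - y ≤ 0; linarith)
    intro y hy; have := st y hy; simpa using this
  have hg1 : ∀ y ∈ Icc (0:ℝ) 12,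
      f1 y - f1 0 - f2 0 * y - f3 0 * y^2/2 - y^3/6 ≤ 0 := by
    have st := step (fun y => f2 y - f2 0 - f3 0 * y - y^2/2)
      (fun y => f1 y - f1 0 - f2 0 * y - f3 0 * y^2/2 - y^3/6)
      (fun y => by
        have hA : HasDerivAt (fun y:ℝ => f2 0 * y) (f2 0) y := by
          simpa using (hasDerivAt_id y).const_mul (f2 0)
        have hB : HasDerivAt (fun y:ℝ => f3 0 * y^2/2) (f3 0 * y) y := by
          have := ((hasDerivAt_pow 2 y).const_mul (f3 0)).div_const 2
          refine this.congr_deriv ?_; push_cast; ring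
        have hC : HasDerivAt (fun y:ℝ => y^3/6) (y^2/2) y := by
          have := (hasDerivAt_pow 3 y).div_const 6
          refine this.congr_deriv ?_; push_cast; ring
        have hS := ((((df1 y).hasDerivAt.sub_const (f1 0)).sub hA).sub hB).sub hC
        simp only [Pi.sub_def] at hS; exact hS)
      (fun y hy => hg2 y hy)
    intro y hy; have := st y hy; simpa using this
  have hg0 : ∀ y ∈ Icc (0:ℝ) 12,
      f y - f 0 - f1 0 * y - f2 0 * y^2/2 - f3 0 * y^3/6 - y^4/24 ≤ 0 := by
    have st := step (fun y => f1 y - f1 0 - f2 0 * y - f3 0 * y^2/2 - y^3/6)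
      (fun y => f y - f 0 - f1 0 * y - f2 0 * y^2/2 - f3 0 * y^3/6 - y^4/24)
      (fun y => by
        have hA : HasDerivAt (fun y:ℝ => f1 0 * y) (f1 0) y := by
          simpa using (hasDerivAt_id y).const_mul (f1 0)
        have hB : HasDerivAt (fun y:ℝ => f2 0 * y^2/2) (f2 0 * y) y := by
          have := ((hasDerivAt_pow 2 y).const_mul (f2 0)).div_const 2
          refine this.congr_deriv ?_; push_cast; ring
        have hC : HasDerivAt (fun y:ℝ => f3 0 * y^3/6) (f3 0 * y^2/2) y := by
          have := ((hasDerivAt_pow 3 y).const_mul (f3 0)).div_const 6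
          refine this.congr_deriv ?_; push_cast; ring
        have hD : HasDerivAt (fun y:ℝ => y^4/24) (y^3/6) y := by
          have := (hasDerivAt_pow 4 y).div_const 24
          refine this.congr_deriv ?_; push_cast; ring
        have hS := (((((dfd y).hasDerivAt.sub_const (f 0)).sub hA).sub hB).sub hC).sub hD
        simp only [Pi.sub_def] at hS; exact hS)
      (fun y hy => hg1 y hy)
    intro y hy; have := st y hy; simpa using this
  have := hg0 x hx
  rw [h2, h3]
  linarith

/-- If `h` has `1`-Lipschitz third derivative on `[-12,12]` and `-h'''(0) + h''(0) ≤ -20`,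
then `min{h(-12), h(9)} ≤ h(0) - 536`. -/
theorem exploit_nc_one_side (h : ℝ → ℝ) (hh : ContDiff ℝ 4 h)
    (hLip : ∀ a ∈ Set.Icc (-12:ℝ) 12, ∀ b ∈ Set.Icc (-12:ℝ) 12,
      |iteratedDeriv 3 h a - iteratedDeriv 3 h b| ≤ |a - b|)
    (hcurv : -iteratedDeriv 3 h 0 + iteratedDeriv 2 h 0 ≤ -20) :
    min (h (-12)) (h 9) ≤ h 0 - 536 := by
  have h0 : (0:ℝ) ∈ Icc (-12:ℝ) 12 := by norm_num
  have hA := taylor_key h hh (fun x hx => by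
      have := hLip x (Icc_subset_Icc (by norm_num) le_rfl hx) 0 h0
      have h2 := (abs_le.mp this).2
      rwa [sub_zero, abs_of_nonneg hx.1] at h2)
    (x := 9) (by norm_num)
  set g : ℝ → ℝ := fun x => h (-x) with hg
  have hgc : ContDiff ℝ 4 g := hh.comp contDiff_neg
  have hB := taylor_key g hgc (fun x hx => by
      have hmem : -x ∈ Icc (-12:ℝ) 12 := by constructor <;> [linarith [hx.2]; linarith [hx.1]]
      have hlow := (abs_le.mp (hLip (-x) hmem 0 h0)).1
      rw [sub_zero, abs_neg, abs_of_nonneg hx.1] at hlow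
      have e1 : iteratedDeriv 3 g x = - iteratedDeriv 3 h (-x) := by
        rw [hg, iteratedDeriv_comp_neg]; norm_num
      have e0 : iteratedDeriv 3 g 0 = - iteratedDeriv 3 h 0 := by
        rw [hg, iteratedDeriv_comp_neg]; norm_num
      rw [e1, e0]; linarith)
    (x := 12) (by norm_num)
  have eg0 : g 0 = h 0 := by simp [hg]
  have eg12 : g 12 = h (-12) := by simp [hg]
  have ed1 : deriv g 0 = - deriv h 0 := by
    have := iteratedDeriv_comp_neg 1 h 0
    rw [← iteratedDeriv_one, hg, iteratedDeriv_comp_neg]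
    norm_num [iteratedDeriv_one]
  have ed2 : iteratedDeriv 2 g 0 = iteratedDeriv 2 h 0 := by
    rw [hg, iteratedDeriv_comp_neg]; norm_num
  have ed3 : iteratedDeriv 3 g 0 = - iteratedDeriv 3 h 0 := by
    rw [hg, iteratedDeriv_comp_neg]; norm_num
  rw [eg0, eg12, ed1, ed2, ed3] at hB
  have m1 : min (h (-12)) (h 9) ≤ h (-12) := min_le_left _ _
  have m2 : min (h (-12)) (h 9) ≤ h 9 := min_le_right _ _
  nlinarith [hA, hB, hcurv, m1, m2]
end

section
/- Let f : ℝ^d → ℝ be differentiable, z ∈ ℝ^d, α > 0, and f̂(x) := f(x) + (α/2)‖z − x‖². Suppose z⁺ satisfies f̂(z⁺) ≤ f(z), ‖∇f̂(z⁺)‖ ≤ ε/2, and ‖∇f(z⁺)‖ ≥ ε. Then f(z⁺) ≤ f(z) − ε²/(8α). -/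
/-- If `z⁺` roughly minimizes the proximally regularized function
`f̂(x) = f(x) + (α/2)‖z - x‖²` (so `f̂(z⁺) ≤ f(z)` and `‖∇f̂(z⁺)‖ ≤ ε/2`) while
`‖∇f(z⁺)‖ ≥ ε`, then `f(z⁺) ≤ f(z) - ε²/(8α)`. -/
theorem prox_large_gradient_progress (d : ℕ) (f : EuclideanSpace ℝ (Fin d) → ℝ)
    (hf : Differentiable ℝ f) (z zp : EuclideanSpace ℝ (Fin d))
    (α ε : ℝ) (hα : 0 < α) (hε : 0 < ε)
    (h1 : f zp + α/2 * ‖z - zp‖^2 ≤ f z)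
    (h2 : ‖gradient (fun x => f x + α/2 * ‖z - x‖^2) zp‖ ≤ ε/2)
    (h3 : ε ≤ ‖gradient f zp‖) :
    f zp ≤ f z - ε^2 / (8 * α) := by
  have hsub : HasFDerivAt (fun x : EuclideanSpace ℝ (Fin d) => z - x)
      (0 - ContinuousLinearMap.id ℝ (EuclideanSpace ℝ (Fin d))) zp :=
    (hasFDerivAt_const z zp).sub (hasFDerivAt_id zp)
  have hF : HasFDerivAt (fun x : EuclideanSpace ℝ (Fin d) => f x + α/2 * ‖z - x‖^2)
      (InnerProductSpace.toDual ℝ (EuclideanSpace ℝ (Fin d)) (gradient f zp) +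
        (α/2) • (2 • (innerSL ℝ (z - zp)).comp
          (0 - ContinuousLinearMap.id ℝ (EuclideanSpace ℝ (Fin d))))) zp :=
    ((hf zp).hasGradientAt.hasFDerivAt).add (hsub.norm_sq.const_mul (α/2))
  have hG : HasGradientAt (fun x : EuclideanSpace ℝ (Fin d) => f x + α/2 * ‖z - x‖^2)
      (gradient f zp + α • (zp - z)) zp := by
    rw [hasGradientAt_iff_hasFDerivAt]
    refine hF.congr_fderiv ?_
    ext v
    simp [InnerProductSpace.toDual_apply_apply, inner_add_left, real_inner_smul_left,
      inner_sub_left, inner_sub_right]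
    ring
  have hGe : gradient (fun x : EuclideanSpace ℝ (Fin d) => f x + α/2 * ‖z - x‖^2) zp
      = gradient f zp + α • (zp - z) := hG.gradient
  have hkey : ε ≤ ε/2 + α * ‖z - zp‖ := by
    have heq : gradient f zp
        = gradient (fun x : EuclideanSpace ℝ (Fin d) => f x + α/2 * ‖z - x‖^2) zp
          + α • (z - zp) := by
      rw [hGe]; module
    calc ε ≤ ‖gradient f zp‖ := h3
      _ ≤ ‖gradient (fun x : EuclideanSpace ℝ (Fin d) => f x + α/2 * ‖z - x‖^2) zp‖
            + ‖α • (z - zp)‖ := by rw [heq]; exact norm_add_le _ _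
      _ ≤ ε/2 + α * ‖z - zp‖ := by
          rw [norm_smul, Real.norm_eq_abs, abs_of_pos hα]
          exact add_le_add_left h2 _
  have hz : ε / (2*α) ≤ ‖z - zp‖ := by
    rw [div_le_iff₀ (by positivity)]
    nlinarith
  have h4 : (ε/(2*α))^2 ≤ ‖z - zp‖^2 := pow_le_pow_left₀ (by positivity) hz 2
  have h5 : α/2 * (ε/(2*α))^2 = ε^2/(8*α) := by field_simp; ring
  nlinarith
end
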